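/- Let n ≥ 1 and 1 ≤ p ≤ n-1. Then the maximum of the absolute values of the eigenvalues of M^p is 2^{2p/(2n-1)}, where M is the matrix of quantum multiplication by τ₁ on H•(OG(1,2n+1)). -/

import Mathlib

open Matrix Polynomial

/-- The matrix of quantum multiplication by τ₁ on H•(OG(1,2n+1)):
M[i+1][i] = 1 for 0 ≤ i ≤ 2n-2 except M[n][n-1] = 2, M[0][2n-2] = 1,
M[1][2n-1] = 1, all other entries zero. -/
def M (n : ℕ) : Matrix (Fin (2*n)) (Fin (2*n)) ℂ :=
  Matrix.of fun i j =>
    if (i : ℕ) = (j : ℕ) + 1 then (if (i : ℕ) = n then 2 else 1)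
    else if (i : ℕ) = 0 ∧ (j : ℕ) = 2*n - 2 then 1
    else if (i : ℕ) = 1 ∧ (j : ℕ) = 2*n - 1 then 1
    else 0

/-!
Let `v` be an eigenvector of `M n` for an eigenvalue `z ≠ 0`. The subdiagonal rows give
`z ^ i * v (i + 1) = w (i + 1) * v 1` with weight `w j = 2` for `j ≥ n` and `1` below (the entry
`M[n][n-1] = 2` switches it on), and the two wrap-around rows 0 and 1 then force
`z ^ (2n-1) * v 1 = 4 * v 1` with `v 1 ≠ 0`. Conversely every root of `z ^ (2n-1) = 4` has an
explicit eigenvector. So the nonzero eigenvalues of `M n` all have modulus `2 ^ (2/(2n-1))`, and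
by spectral mapping those of `(M n) ^ p` have modulus `2 ^ (2p/(2n-1))`.
-/

theorem Matrix.mem_spectrum_iff_exists_mulVec_eq_smul {m K : Type*} [Fintype m] [DecidableEq m]
    [Field K] (A : Matrix m m K) (z : K) : z ∈ spectrum K A ↔ ∃ v ≠ 0, A *ᵥ v = z • v := by
  rw [← Matrix.spectrum_toLin', ← Module.End.hasEigenvalue_iff_mem_spectrum,
    Module.End.hasEigenvalue_iff, Submodule.ne_bot_iff]
  simp [and_comm]

theorem ite_succ_mul_ite_le {R : Type*} [MulOneClass R] (a : R) (n i : ℕ) :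
    (if i + 1 = n then a else 1) * (if n ≤ i then a else 1) = if n ≤ i + 1 then a else 1 := by
  split_ifs <;> first | omega | simp

theorem two_rpow_two_div_pow {k : ℕ} (hk : k ≠ 0) : ((2 : ℝ) ^ ((2 : ℝ) / k)) ^ k = 4 := by
  rw [← Real.rpow_natCast, ← Real.rpow_mul zero_le_two, div_mul_cancel₀ _ (by positivity)]
  norm_num

theorem Complex.norm_pow_of_pow_eq_four {k : ℕ} (hk : k ≠ 0) {z : ℂ} (hz : z ^ k = 4) (p : ℕ) :
    ‖z ^ p‖ = (2 : ℝ) ^ ((2 * p : ℝ) / k) := by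
  have hnorm : ‖z‖ = (2 : ℝ) ^ ((2 : ℝ) / k) := by
    rw [← pow_left_inj₀ (norm_nonneg z) (by positivity) hk, two_rpow_two_div_pow hk, ← norm_pow, hz]
    norm_num
  rw [norm_pow, hnorm, ← Real.rpow_natCast, ← Real.rpow_mul zero_le_two]
  ring_nf

section

variable {n : ℕ}

theorem M_mulVec_zero (hn : 2 ≤ n) (v : Fin (2*n) → ℂ) :
    (M n *ᵥ v) ⟨0, by omega⟩ = v ⟨2*n-2, by omega⟩ := by
  rw [mulVec, dotProduct, Fintype.sum_eq_single ⟨2*n-2, by omega⟩]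
  · simp [M]
  · intro j hj
    simp only [M, of_apply, ne_eq, Fin.ext_iff] at hj ⊢
    grind

theorem M_mulVec_one (hn : 2 ≤ n) (v : Fin (2*n) → ℂ) :
    (M n *ᵥ v) ⟨1, by omega⟩ = v ⟨0, by omega⟩ + v ⟨2*n-1, by omega⟩ := by
  rw [mulVec, dotProduct,
    Fintype.sum_eq_add ⟨0, by omega⟩ ⟨2*n-1, by omega⟩ (by simp [Fin.ext_iff]; omega)]
  · simp only [M, of_apply]
    grind
  · rintro j ⟨h0, h1⟩
    simp only [M, of_apply, ne_eq, Fin.ext_iff] at h0 h1 ⊢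
    grind

theorem M_mulVec_succ {i : ℕ} (hi : 1 ≤ i) (hin : i + 1 < 2*n) (v : Fin (2*n) → ℂ) :
    (M n *ᵥ v) ⟨i + 1, hin⟩ = (if i + 1 = n then 2 else 1) * v ⟨i, by omega⟩ := by
  rw [mulVec, dotProduct, Fintype.sum_eq_single ⟨i, by omega⟩]
  · simp [M]
  · intro j hj
    simp only [M, of_apply, ne_eq, Fin.ext_iff] at hj ⊢
    grind

theorem M_eigenvector_pow_mul_apply_succ (hn : 2 ≤ n) {z : ℂ} {v : Fin (2*n) → ℂ} (hv : M n *ᵥ v = z • v) :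
    ∀ i (hi : i + 1 < 2*n),
      z ^ i * v ⟨i + 1, hi⟩ = (if n ≤ i + 1 then 2 else 1) * v ⟨1, by omega⟩
  | 0, _ => by simp; omega
  | i + 1, hi => by
    have hrow := M_mulVec_succ (by omega) hi v
    rw [hv, Pi.smul_apply, smul_eq_mul] at hrow
    calc z ^ (i + 1) * v ⟨i + 2, hi⟩ = z ^ i * (z * v ⟨i + 2, hi⟩) := by ring
      _ = (if i + 2 = n then 2 else 1) * (z ^ i * v ⟨i + 1, by omega⟩) := by rw [hrow]; ring
      _ = _ := by
        rw [M_eigenvector_pow_mul_apply_succ hn hv i (by omega), ← mul_assoc, ite_succ_mul_ite_le]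

theorem pow_eq_four_of_M_mulVec_eq_smul (hn : 2 ≤ n) {z : ℂ} (hz : z ≠ 0) {v : Fin (2*n) → ℂ}
    (hv0 : v ≠ 0) (hv : M n *ᵥ v = z • v) : z ^ (2*n - 1) = 4 := by
  have hrow0 := M_mulVec_zero hn v
  have hrow1 := M_mulVec_one hn v
  rw [hv, Pi.smul_apply, smul_eq_mul] at hrow0 hrow1
  have hpen := M_eigenvector_pow_mul_apply_succ hn hv (2*n - 3) (by omega)
  have hlast := M_eigenvector_pow_mul_apply_succ hn hv (2*n - 2) (by omega)
  simp only [show 2*n - 3 + 1 = 2*n - 2 by omega, show 2*n - 2 + 1 = 2*n - 1 by omega,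
    if_pos (show n ≤ 2*n - 2 by omega), if_pos (show n ≤ 2*n - 1 by omega)] at hpen hlast
  have hfirst : z ^ (2*n - 2) * v ⟨0, by omega⟩ = 2 * v ⟨1, by omega⟩ := by
    rw [← hpen, ← hrow0, show 2*n - 2 = 2*n - 3 + 1 by omega, pow_succ, mul_assoc]
  have hone : z ^ (2*n - 1) * v ⟨1, by omega⟩ = 4 * v ⟨1, by omega⟩ := by
    rw [show 2*n - 1 = 2*n - 2 + 1 by omega, pow_succ, mul_assoc, hrow1, mul_add, hfirst, hlast]
    ring
  have hv1 : v ⟨1, by omega⟩ ≠ 0 := by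
    refine fun hv1 => hv0 (funext fun ⟨j, hj⟩ => ?_)
    cases j with
    | zero => simpa [hv1, hz] using hfirst
    | succ i => simpa [hv1, hz] using M_eigenvector_pow_mul_apply_succ hn hv i hj
  exact mul_right_cancel₀ hv1 hone

theorem M_mulVec_eq_smul_of_pow_eq_four (hn : 2 ≤ n) {z : ℂ} (hz : z ^ (2*n - 1) = 4) :
    ∃ v ≠ 0, M n *ᵥ v = z • v := by
  let v : Fin (2*n) → ℂ := fun j =>
    if (j : ℕ) = 0 then 2 else (if n ≤ (j : ℕ) then 2 else 1) * z ^ (2*n - 1 - j)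
  refine ⟨v, fun h => by simpa [v] using congrFun h ⟨0, by omega⟩, funext fun ⟨j, hj⟩ => ?_⟩
  rw [Pi.smul_apply, smul_eq_mul]
  match j, hj with
  | 0, _ =>
    rw [M_mulVec_zero hn]
    simp only [v, if_neg (show 2*n - 2 ≠ 0 by omega), if_pos (show n ≤ 2*n - 2 by omega),
      show 2*n - 1 - (2*n - 2) = 1 by omega, if_pos rfl, pow_one]
    exact mul_comm _ _
  | 1, _ =>
    rw [M_mulVec_one hn]
    simp only [v, if_neg (show 2*n - 1 ≠ 0 by omega), if_pos (show n ≤ 2*n - 1 by omega),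
      if_neg one_ne_zero, if_neg (show ¬ n ≤ 1 by omega), if_pos rfl, Nat.sub_self, pow_zero, one_mul, ← pow_succ',
      show 2*n - 1 - 1 + 1 = 2*n - 1 by omega, hz]
    norm_num
  | i + 2, hi =>
    rw [M_mulVec_succ (by omega) hi]
    simp only [v, if_neg (show i + 1 ≠ 0 by omega), if_neg (show i + 2 ≠ 0 by omega), ← mul_assoc,
      ite_succ_mul_ite_le]
    rw [show 2*n - 1 - (i + 1) = 2*n - 1 - (i + 2) + 1 by omega, pow_succ]
    ring

theorem eq_zero_or_pow_eq_four_of_mem_spectrum_M (hn : 2 ≤ n) {z : ℂ}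
    (hz : z ∈ spectrum ℂ (M n)) : z = 0 ∨ z ^ (2*n - 1) = 4 := by
  obtain ⟨v, hv0, hv⟩ := (mem_spectrum_iff_exists_mulVec_eq_smul _ _).1 hz
  exact or_iff_not_imp_left.2 fun hz0 => pow_eq_four_of_M_mulVec_eq_smul hn hz0 hv0 hv

theorem mem_spectrum_M_of_pow_eq_four (hn : 2 ≤ n) {z : ℂ} (hz : z ^ (2*n - 1) = 4) :
    z ∈ spectrum ℂ (M n) :=
  (mem_spectrum_iff_exists_mulVec_eq_smul _ _).2 (M_mulVec_eq_smul_of_pow_eq_four hn hz)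

end

theorem fpdim_low_general (n p : ℕ) (hp1 : 1 ≤ p) (hp2 : p ≤ n - 1) :
    IsGreatest {r : ℝ | ∃ z ∈ spectrum ℂ ((M n) ^ p), r = ‖z‖}
      ((2:ℝ) ^ ((2*p : ℝ) / (2*n - 1))) := by
  have hn : 2 ≤ n := by omega
  have hk : 2*n - 1 ≠ 0 := by omega
  have hcast : ((2*n - 1 : ℕ) : ℝ) = 2*n - 1 := by
    rw [Nat.cast_sub (by omega)]
    push_cast
    rfl
  rw [spectrum.map_pow_of_pos (M n) hp1, ← hcast]
  constructor
  · let c : ℂ := ((2 : ℝ) ^ ((2 : ℝ) / (2*n - 1 : ℕ)) : ℝ)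
    have hc : c ^ (2*n - 1) = 4 := by
      rw [← Complex.ofReal_pow, two_rpow_two_div_pow hk]
      norm_num
    exact ⟨c ^ p, ⟨c, mem_spectrum_M_of_pow_eq_four hn hc, rfl⟩,
      (Complex.norm_pow_of_pow_eq_four hk hc p).symm⟩
  · rintro _ ⟨_, ⟨z, hz, rfl⟩, rfl⟩
    rcases eq_zero_or_pow_eq_four_of_mem_spectrum_M hn hz with rfl | hz4
    · change ‖(0 : ℂ) ^ p‖ ≤ _
      rw [zero_pow (by omega), norm_zero]
      positivity
    · exact (Complex.norm_pow_of_pow_eq_four hk hz4 p).le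

theorem fpdim_low (n p : ℕ) (hn : 1 ≤ n) (hp1 : 1 ≤ p) (hp2 : p ≤ n - 1) :
    IsGreatest {r : ℝ | ∃ z ∈ spectrum ℂ ((M n) ^ p), r = ‖z‖}
      ((2:ℝ) ^ ((2*p : ℝ) / (2*n - 1))) :=
  fpdim_low_general n p hp1 hp2
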